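/- For all i, j ∈ {1, 2, 3}, n_jᵀ φ_HHJ^i n_j = δ_{ij}. -/

import Mathlib

noncomputable section
open MeasureTheory

namespace PaperStmt

/-- Euclidean dot product on `ℝ²`. -/
def dotp (v w : ℝ × ℝ) : ℝ := v.1 * w.1 + v.2 * w.2

/-- Euclidean length on `ℝ²`. -/
def len (v : ℝ × ℝ) : ℝ := Real.sqrt (v.1 ^ 2 + v.2 ^ 2)

/-- Cross product (determinant) of two planar vectors. -/
def crossp (v w : ℝ × ℝ) : ℝ := v.1 * w.2 - v.2 * w.1

/-- The vertices `p 0, p 1, p 2` form a nondegenerate triangle listed counterclockwise. -/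
def Ccw (p : Fin 3 → ℝ × ℝ) : Prop := 0 < crossp (p 1 - p 0) (p 2 - p 0)

/-- Vector of the edge `e_i` opposite vertex `p i`, oriented counterclockwise
(from `p (i+1)` to `p (i−1)`). -/
def edgeVec (p : Fin 3 → ℝ × ℝ) (i : Fin 3) : ℝ × ℝ := p (i - 1) - p (i + 1)

/-- Length `|e_i|` of the edge opposite vertex `p i`. -/
def elen (p : Fin 3 → ℝ × ℝ) (i : Fin 3) : ℝ := len (edgeVec p i)

/-- Unit tangent `t_i = (p_{i−1} − p_{i+1})/|e_i|` of edge `e_i`. -/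
def tvec (p : Fin 3 → ℝ × ℝ) (i : Fin 3) : ℝ × ℝ := (elen p i)⁻¹ • edgeVec p i

/-- Outward unit normal `n_i` of edge `e_i` (clockwise rotation of the tangent,
which points outward for a counterclockwise triangle). -/
def nvec (p : Fin 3 → ℝ × ℝ) (i : Fin 3) : ℝ × ℝ := ((tvec p i).2, -(tvec p i).1)

/-- Interior angle `θ_i` of the triangle at the vertex `p i`. -/
def angleAt (p : Fin 3 → ℝ × ℝ) (i : Fin 3) : ℝ :=
  Real.arccos (dotp (p (i + 1) - p i) (p (i - 1) - p i) /
    (len (p (i + 1) - p i) * len (p (i - 1) - p i)))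

/-- Outer product `v wᵀ` of two planar (column) vectors, as a `2 × 2` matrix. -/
def outerProd (v w : ℝ × ℝ) : Matrix (Fin 2) (Fin 2) ℝ :=
  !![v.1 * w.1, v.1 * w.2; v.2 * w.1, v.2 * w.2]

/-- Basis matrices `φ_HHJ^i = −(1/(2 sin θ_{i−1} sin θ_{i+1})) (t_{i−1} t_{i+1}ᵀ + t_{i+1} t_{i−1}ᵀ)`
of the lowest-order Hellan–Herrmann–Johnson element. -/
def phiHHJ (p : Fin 3 → ℝ × ℝ) (i : Fin 3) : Matrix (Fin 2) (Fin 2) ℝ :=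
  (-(2 * Real.sin (angleAt p (i - 1)) * Real.sin (angleAt p (i + 1)))⁻¹) •
    (outerProd (tvec p (i - 1)) (tvec p (i + 1)) + outerProd (tvec p (i + 1)) (tvec p (i - 1)))

/-- The quadratic form `vᵀ τ v` of a `2 × 2` matrix on a planar vector. -/
def qf (τ : Matrix (Fin 2) (Fin 2) ℝ) (v : ℝ × ℝ) : ℝ :=
  v.1 * (τ 0 0 * v.1 + τ 0 1 * v.2) + v.2 * (τ 1 0 * v.1 + τ 1 1 * v.2)

end PaperStmt

/-!
With `D = 2|K|`, the normal–tangent products are `n_j · t_k = (e_k × e_j) / (|e_k| |e_j|)` and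
the sines are `sin θ_k = D / (|e_{k-1}| |e_{k+1}|)`. For `j ≠ i` one of `t_{i-1}, t_{i+1}` is `t_j`,
which is orthogonal to `n_j`, so the quadratic form vanishes. For `j = i` the cross products
`e_{i-1} × e_i` and `e_{i+1} × e_i` are `D` and `-D`, and everything cancels against the sines.
-/

namespace PaperStmt

lemma crossp_self (v : ℝ × ℝ) : crossp v v = 0 := by
  simp only [crossp]; ring

lemma crossp_swap (v w : ℝ × ℝ) : crossp w v = -crossp v w := by
  simp only [crossp]; ring

lemma crossp_neg_right (v w : ℝ × ℝ) : crossp v (-w) = -crossp v w := by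
  simp only [crossp, Prod.fst_neg, Prod.snd_neg]; ring

lemma len_neg (v : ℝ × ℝ) : len (-v) = len v := by
  simp only [len, Prod.fst_neg, Prod.snd_neg, neg_sq]

lemma len_sq (v : ℝ × ℝ) : len v ^ 2 = v.1 ^ 2 + v.2 ^ 2 :=
  Real.sq_sqrt (by positivity)

lemma dotp_sq_add_crossp_sq (v w : ℝ × ℝ) :
    dotp v w ^ 2 + crossp v w ^ 2 = len v ^ 2 * len w ^ 2 := by
  rw [len_sq, len_sq]; simp only [dotp, crossp]; ring

lemma len_mul_len_pos_of_crossp_pos {v w : ℝ × ℝ} (h : 0 < crossp v w) :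
    0 < len v * len w := by
  have hsq : 0 < (len v * len w) ^ 2 := by
    nlinarith [dotp_sq_add_crossp_sq v w, sq_nonneg (dotp v w)]
  have hnonneg : 0 ≤ len v * len w := mul_nonneg (Real.sqrt_nonneg _) (Real.sqrt_nonneg _)
  exact hnonneg.lt_of_ne (by rintro h0; simp [← h0] at hsq)

lemma sin_arccos_dotp_div {v w : ℝ × ℝ} (h : 0 < crossp v w) :
    Real.sin (Real.arccos (dotp v w / (len v * len w))) = crossp v w / (len v * len w) := by
  have hL := len_mul_len_pos_of_crossp_pos h
  have hcos : 1 - (dotp v w / (len v * len w)) ^ 2 = (crossp v w / (len v * len w)) ^ 2 := by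
    rw [div_pow, div_pow, one_sub_div (pow_pos hL 2).ne', mul_pow, ← dotp_sq_add_crossp_sq,
      add_sub_cancel_left]
  rw [Real.sin_arccos, hcos, Real.sqrt_sq (div_pos h hL).le]

lemma qf_smul (c : ℝ) (M : Matrix (Fin 2) (Fin 2) ℝ) (v : ℝ × ℝ) :
    qf (c • M) v = c * qf M v := by
  simp only [qf, Matrix.smul_apply, smul_eq_mul]; ring

lemma qf_outerProd_add_outerProd (v w n : ℝ × ℝ) :
    qf (outerProd v w + outerProd w v) n = 2 * dotp n v * dotp n w := by
  simp only [qf, outerProd, dotp, Matrix.add_apply, Matrix.of_apply, Matrix.cons_val',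
    Matrix.cons_val_zero, Matrix.cons_val_one, Matrix.cons_val_fin_one]
  ring

lemma fin3_sub_one_sub_one (k : Fin 3) : k - 1 - 1 = k + 1 := by
  fin_cases k <;> rfl

lemma fin3_add_one_add_one (k : Fin 3) : k + 1 + 1 = k - 1 := by
  fin_cases k <;> rfl

lemma fin3_eq_sub_one_or_eq_add_one_of_ne {i j : Fin 3} (hij : i ≠ j) : j = i - 1 ∨ j = i + 1 := by
  revert i j; decide

/-- Twice the signed area of the triangle, `2|K|`. -/
def doubleArea (p : Fin 3 → ℝ × ℝ) : ℝ := crossp (p 1 - p 0) (p 2 - p 0)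

lemma crossp_edgeVec_succ (p : Fin 3 → ℝ × ℝ) (k : Fin 3) :
    crossp (edgeVec p k) (edgeVec p (k + 1)) = doubleArea p := by
  fin_cases k <;>
    simp only [edgeVec, doubleArea, crossp, Prod.fst_sub, Prod.snd_sub, Fin.zero_eta, Fin.mk_one,
      Fin.reduceFinMk, Fin.isValue, Fin.reduceAdd, Fin.reduceSub] <;>
    ring

lemma elen_pos {p : Fin 3 → ℝ × ℝ} (hp : Ccw p) (k : Fin 3) : 0 < elen p k := by
  have h : 0 < crossp (edgeVec p k) (edgeVec p (k + 1)) := by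
    rw [crossp_edgeVec_succ]; exact hp
  exact pos_of_mul_pos_left (len_mul_len_pos_of_crossp_pos h) (Real.sqrt_nonneg _)

lemma sin_angleAt {p : Fin 3 → ℝ × ℝ} (hp : Ccw p) (k : Fin 3) :
    Real.sin (angleAt p k) = doubleArea p / (elen p (k - 1) * elen p (k + 1)) := by
  have hu : p (k + 1) - p k = edgeVec p (k - 1) := by
    rw [edgeVec, fin3_sub_one_sub_one, sub_add_cancel]
  have hw : p (k - 1) - p k = -edgeVec p (k + 1) := by
    rw [edgeVec, fin3_add_one_add_one, add_sub_cancel_right, neg_sub]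
  have hcross : crossp (p (k + 1) - p k) (p (k - 1) - p k) = doubleArea p := by
    rw [hu, hw, crossp_neg_right, ← crossp_swap, ← fin3_add_one_add_one, crossp_edgeVec_succ]
  have hpos : 0 < crossp (p (k + 1) - p k) (p (k - 1) - p k) := hcross ▸ hp
  rw [angleAt, sin_arccos_dotp_div hpos, hcross, hu, hw, len_neg, elen, elen]

lemma dotp_nvec_tvec (p : Fin 3 → ℝ × ℝ) (j k : Fin 3) :
    dotp (nvec p j) (tvec p k) = crossp (edgeVec p k) (edgeVec p j) / (elen p k * elen p j) := by
  simp only [dotp, nvec, tvec, crossp, Prod.smul_fst, Prod.smul_snd, smul_eq_mul]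
  field_simp
  ring

lemma dotp_nvec_tvec_self (p : Fin 3 → ℝ × ℝ) (k : Fin 3) : dotp (nvec p k) (tvec p k) = 0 := by
  rw [dotp_nvec_tvec, crossp_self, zero_div]

lemma qf_phiHHJ (p : Fin 3 → ℝ × ℝ) (i : Fin 3) (v : ℝ × ℝ) :
    qf (phiHHJ p i) v = -(2 * Real.sin (angleAt p (i - 1)) * Real.sin (angleAt p (i + 1)))⁻¹ *
      (2 * dotp v (tvec p (i - 1)) * dotp v (tvec p (i + 1))) := by
  rw [phiHHJ, qf_smul, qf_outerProd_add_outerProd]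

lemma qf_phiHHJ_nvec_self {p : Fin 3 → ℝ × ℝ} (hp : Ccw p) (i : Fin 3) :
    qf (phiHHJ p i) (nvec p i) = 1 := by
  have hK : doubleArea p ≠ 0 := ne_of_gt hp
  have he := (elen_pos hp i).ne'
  have he_prev := (elen_pos hp (i - 1)).ne'
  have he_next := (elen_pos hp (i + 1)).ne'
  have hprev : crossp (edgeVec p (i - 1)) (edgeVec p i) = doubleArea p := by
    rw [← crossp_edgeVec_succ p (i - 1), sub_add_cancel]
  have hnext : crossp (edgeVec p (i + 1)) (edgeVec p i) = -doubleArea p := by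
    rw [crossp_swap, crossp_edgeVec_succ]
  rw [qf_phiHHJ, sin_angleAt hp, sin_angleAt hp, dotp_nvec_tvec, dotp_nvec_tvec, hprev, hnext,
    fin3_sub_one_sub_one, fin3_add_one_add_one, sub_add_cancel, add_sub_cancel_right]
  field_simp

lemma qf_phiHHJ_nvec_of_ne (p : Fin 3 → ℝ × ℝ) {i j : Fin 3} (hij : i ≠ j) :
    qf (phiHHJ p i) (nvec p j) = 0 := by
  rcases fin3_eq_sub_one_or_eq_add_one_of_ne hij with rfl | rfl <;>
    simp [qf_phiHHJ, dotp_nvec_tvec_self]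

end PaperStmt

open PaperStmt in
theorem phiHHJ_dual_basis (p : Fin 3 → ℝ × ℝ) (hp : Ccw p) (i j : Fin 3) :
    qf (phiHHJ p i) (nvec p j) = if i = j then 1 else 0 := by
  split_ifs with hij
  · subst hij
    exact qf_phiHHJ_nvec_self hp i
  · exact qf_phiHHJ_nvec_of_ne p hij
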